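/- For every integer n ≥ 1, the type B Narayana polynomials satisfy N^B_n(t) = t · N^B_{n-1}(t) + Σ_{k=1}^n N^A_{k-1}(t) · N^B_{n-k}(t) + Σ_{k=1}^{n-1} N^B_{k-1}(t) · N^A_{n-k}(t). -/
import Mathlib


open Finset

/-- Type A Narayana polynomial `N^A_n(t)`, with convention `N^A_0 = 1`. -/
noncomputable def NA (n : ℕ) (t : ℝ) : ℝ :=
  if n = 0 then 1 else
    ∑ k ∈ Finset.Icc 1 n, (1 / (k : ℝ)) * ((n - 1).choose (k - 1) : ℝ) * (n.choose (k - 1) : ℝ) * t ^ k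

/-- Type B Narayana polynomial `N^B_n(t)`. -/
noncomputable def NB (n : ℕ) (t : ℝ) : ℝ :=
  ∑ k ∈ Finset.range (n + 1), ((n.choose k : ℝ)) ^ 2 * t ^ k

/-- `Q_n(t) = ∑_{k=0}^n C(n,k) C(n+1,k) t^k`, the derivative of `N^A_{n+1}`. -/
noncomputable def Qp (n : ℕ) (t : ℝ) : ℝ :=
  ∑ k ∈ Finset.range (n + 1), ((n.choose k : ℝ)) * (((n + 1).choose k : ℝ)) * t ^ k

/-! ### Auxiliary binomial coefficient identities over `ℝ` -/

lemma cast_row (c k : ℕ) :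
    ((k:ℝ)+1) * (c.choose (k+1) : ℝ) = ((c:ℝ) - k) * (c.choose k : ℝ) := by
  rcases le_or_gt k c with h | h
  · have h2 : ((c.choose (k+1) : ℝ)) * ((k:ℝ)+1) = (c.choose k : ℝ) * (((c - k : ℕ)):ℝ) := by
      exact_mod_cast congrArg (Nat.cast : ℕ → ℝ) (Nat.choose_succ_right_eq c k)
    rw [Nat.cast_sub h] at h2
    linarith
  · rw [Nat.choose_eq_zero_of_lt h, Nat.choose_eq_zero_of_lt (by omega)]
    norm_num

lemma cast_col (c k : ℕ) :
    ((c:ℝ)+1) * (c.choose k : ℝ) = ((k:ℝ)+1) * ((c+1).choose (k+1) : ℝ) := by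
  have h2 : ((c:ℝ)+1) * (c.choose k : ℝ) = ((c+1).choose (k+1) : ℝ) * ((k:ℝ)+1) := by
    exact_mod_cast congrArg (Nat.cast : ℕ → ℝ) (Nat.add_one_mul_choose_eq c k)
  linarith

lemma cast_col2 (c k : ℕ) :
    ((c:ℝ)+1) * (c.choose k : ℝ) = ((c:ℝ)+1-k) * ((c+1).choose k : ℝ) := by
  rcases le_or_gt k (c+1) with h | h
  · have h2 : (c.choose k : ℝ) * ((c:ℝ)+1) = ((c+1).choose k : ℝ) * (((c+1-k : ℕ)):ℝ) := by
      exact_mod_cast congrArg (Nat.cast : ℕ → ℝ) (Nat.choose_mul_succ_eq c k)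
    rw [Nat.cast_sub h] at h2
    push_cast at h2
    linarith
  · rw [Nat.choose_eq_zero_of_lt (by omega), Nat.choose_eq_zero_of_lt (by omega)]
    norm_num

/-- Pointwise (per coefficient) form of the Legendre-type three term recurrence. -/
lemma Lcoef (d i : ℕ) :
    ((d:ℝ)+2) * (((d+2).choose (i+2) : ℝ))^2
      = (2*(d:ℝ)+3) * (((d+1).choose (i+2):ℝ))^2 + (2*(d:ℝ)+3) * (((d+1).choose (i+1):ℝ))^2
        - ((d:ℝ)+1) * ((d.choose (i+2):ℝ))^2 + (2*(d:ℝ)+2) * ((d.choose (i+1):ℝ))^2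
        - ((d:ℝ)+1) * ((d.choose i:ℝ))^2 := by
  set x := (((d+1).choose (i+2):ℝ)) with hx
  set y := (((d+1).choose (i+1):ℝ)) with hy
  set z1 := ((d.choose (i+2):ℝ)) with hz1
  set z2 := ((d.choose (i+1):ℝ)) with hz2
  set z3 := ((d.choose i:ℝ)) with hz3
  have hp : (((d+2).choose (i+2) : ℝ)) = y + x := by
    rw [show d+2 = (d+1)+1 from rfl, Nat.choose_succ_succ (d+1) (i+1)]
    push_cast; rw [hx, hy]
  have h1 : ((i:ℝ)+1+1) * x = ((d:ℝ)+1 - (i+1)) * y := by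
    have := cast_row (d+1) (i+1); push_cast at this ⊢; linarith
  have h2 : ((d:ℝ)+1) * z1 = ((d:ℝ)+1-(i+2)) * x := by
    have := cast_col2 d (i+2); push_cast at this ⊢; linarith
  have h3 : ((d:ℝ)+1) * z2 = ((i:ℝ)+2) * x := by
    have := cast_col d (i+1); push_cast at this ⊢; linarith
  have h4 : ((d:ℝ)+1) * z3 = ((i:ℝ)+1) * y := by
    have := cast_col d i; push_cast at this ⊢; linarith
  rw [hp]
  have hdne : (((d:ℝ)+1)^2) ≠ 0 := by positivity
  apply mul_left_cancel₀ hdne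
  linear_combination (((d:ℝ)+1)*(((d:ℝ)+1)*z1 + ((d:ℝ)-1-i)*x)) * h2
    - (2*((d:ℝ)+1)*(((d:ℝ)+1)*z2 + ((i:ℝ)+2)*x)) * h3
    + (((d:ℝ)+1)*(((d:ℝ)+1)*z3 + ((i:ℝ)+1)*y)) * h4
    + (((d:ℝ)+1)*(-(2*(d:ℝ)+(i:ℝ)+4)*x + ((d:ℝ)+(i:ℝ)+2)*y)) * h1

/-! ### Sum manipulation helpers -/

lemma pad (f : ℕ → ℝ) {N M : ℕ} (h : N ≤ M) (hf : ∀ k, N ≤ k → f k = 0) (t : ℝ) :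
    ∑ k ∈ range N, f k * t ^ k = ∑ k ∈ range M, f k * t ^ k := by
  apply Finset.sum_subset (Finset.range_subset_range.2 h)
  intro k _ hk
  rw [hf k (by simpa using hk)]; ring

lemma tshift (f : ℕ → ℝ) (N : ℕ) (t : ℝ) :
    t * ∑ k ∈ Finset.range N, f k * t ^ k
      = ∑ k ∈ Finset.range (N + 1), (if k = 0 then (0:ℝ) else f (k - 1)) * t ^ k := by
  rw [Finset.sum_range_succ', Finset.mul_sum]
  simp only [Nat.succ_ne_zero, if_false, Nat.add_sub_cancel, if_pos rfl, zero_mul, add_zero,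
    reduceIte]
  exact Finset.sum_congr rfl fun k _ => by ring

lemma NB_eq (c N : ℕ) (h : c < N) (t : ℝ) :
    NB c t = ∑ k ∈ range N, ((c.choose k : ℝ))^2 * t^k := by
  rw [NB]
  apply pad _ h
  intro k hk
  rw [Nat.choose_eq_zero_of_lt hk]; norm_num

lemma NB0 (t : ℝ) : NB 0 t = 1 := by simp [NB]

lemma NB1 (t : ℝ) : NB 1 t = 1 + t := by
  simp [NB, Finset.sum_range_succ]

lemma NA0 (t : ℝ) : NA 0 t = 1 := by simp [NA]

/-! ### The Legendre-type recurrence for `NB` -/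

lemma Laux (d : ℕ) (t : ℝ) :
    ((d:ℝ)+2) * NB (d+2) t
      = (2*(d:ℝ)+3) * NB (d+1) t + (2*(d:ℝ)+3) * (t * NB (d+1) t)
        - ((d:ℝ)+1) * NB d t + (2*(d:ℝ)+2) * (t * NB d t) - ((d:ℝ)+1) * (t^2 * NB d t) := by
  have f2 : t * NB (d+1) t
      = ∑ k ∈ range (d+5), (if k = 0 then (0:ℝ) else (((d+1).choose (k-1):ℝ))^2) * t^k := by
    rw [NB_eq (d+1) (d+4) (by omega) t, tshift]
  have f3 : t * NB d t
      = ∑ k ∈ range (d+5), (if k = 0 then (0:ℝ) else ((d.choose (k-1):ℝ))^2) * t^k := by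
    rw [NB_eq d (d+4) (by omega) t, tshift]
  have f4 : t^2 * NB d t
      = ∑ k ∈ range (d+5),
          (if k = 0 then (0:ℝ) else (if k-1 = 0 then (0:ℝ) else ((d.choose (k-1-1):ℝ))^2)) * t^k := by
    rw [show t^2 * NB d t = t * (t * NB d t) by ring, NB_eq d (d+3) (by omega) t, tshift, tshift]
  rw [f2, f3, f4, NB_eq (d+2) (d+5) (by omega) t, NB_eq (d+1) (d+5) (by omega) t,
    NB_eq d (d+5) (by omega) t]
  rw [Finset.mul_sum, Finset.mul_sum, Finset.mul_sum, Finset.mul_sum, Finset.mul_sum,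
    Finset.mul_sum, ← Finset.sum_add_distrib, ← Finset.sum_sub_distrib,
    ← Finset.sum_add_distrib, ← Finset.sum_sub_distrib]
  apply Finset.sum_congr rfl
  intro k _
  match k with
  | 0 => push_cast; simp; ring
  | 1 => simp [Nat.choose_one_right]; push_cast; ring
  | (i+2) =>
    simp only [Nat.succ_ne_zero, if_false, Nat.add_sub_cancel, reduceIte]
    have h := Lcoef d i
    rw [show (i+2-1 : ℕ) = i+1 by omega]
    rw [if_neg (Nat.succ_ne_zero i), show (i+1-1 : ℕ) = i by omega]
    linear_combination (t^(i+2)) * h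

lemma Lpoly (c : ℕ) (t : ℝ) :
    ((c:ℝ)+1) * NB (c+1) t
      = (2*(c:ℝ)+1)*(1+t)*NB c t - (c:ℝ)*(1-t)^2*NB (c-1) t := by
  match c with
  | 0 =>
    rw [NB1, NB0]
    push_cast
    ring
  | (d+1) =>
    have h := Laux d t
    simp only [Nat.add_sub_cancel]
    push_cast
    linear_combination h

/-! ### `NA` in terms of `NB` -/

lemma NA_eq (e : ℕ) (t : ℝ) :
    NA (e+1) t
      = t * ∑ j ∈ range (e+1),
          ((1/((j:ℝ)+1)) * ((e.choose j : ℝ)) * (((e+1).choose j : ℝ))) * t^j := by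
  rw [NA, if_neg (Nat.succ_ne_zero e), ← Finset.Ico_add_one_right_eq_Icc, Finset.sum_Ico_eq_sum_range,
    Finset.mul_sum]
  apply Finset.sum_congr (by norm_num)
  intro j _
  have h1 : (1 + j - 1 : ℕ) = j := by omega
  have h2 : (e + 1 - 1 : ℕ) = e := by omega
  rw [h1, h2]
  push_cast
  ring

lemma NA_eq' (e : ℕ) (t : ℝ) :
    NA (e+1) t
      = t * ∑ j ∈ range (e+2),
          ((1/((j:ℝ)+1)) * ((e.choose j : ℝ)) * (((e+1).choose j : ℝ))) * t^j := by
  rw [NA_eq e t]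
  congr 1
  apply pad _ (by omega)
  intro k hk
  rw [Nat.choose_eq_zero_of_lt (by omega : e < k)]
  norm_num

lemma Acoef (e j : ℕ) :
    2*((e:ℝ)+1) * ((1/((j:ℝ)+1)) * ((e.choose j : ℝ)) * (((e+1).choose j : ℝ)))
      = (((e+2).choose (j+1) : ℝ))^2 - (((e+1).choose (j+1) : ℝ))^2 - (((e+1).choose j : ℝ))^2 := by
  have hp : (((e+2).choose (j+1) : ℝ)) = ((e+1).choose j : ℝ) + ((e+1).choose (j+1) : ℝ) := by
    rw [show e+2 = (e+1)+1 from rfl, Nat.choose_succ_succ (e+1) j]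
    push_cast; ring
  have hcol := cast_col e j
  have hj : ((j:ℝ)+1) ≠ 0 := by positivity
  rw [hp]
  have key : 2*((e:ℝ)+1) * ((e.choose j : ℝ)) * ((e+1).choose j : ℝ)
      = ((j:ℝ)+1) * (2 * ((e+1).choose j : ℝ) * ((e+1).choose (j+1) : ℝ)) := by
    linear_combination (2*((e+1).choose j : ℝ)) * hcol
  field_simp
  linear_combination key

lemma Apoly (e : ℕ) (t : ℝ) :
    2*((e:ℝ)+1) * NA (e+1) t = NB (e+2) t - NB (e+1) t - t * NB (e+1) t := by
  have f1 : t * NB (e+1) t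
      = ∑ k ∈ range (e+3), (if k = 0 then (0:ℝ) else (((e+1).choose (k-1):ℝ))^2) * t^k := by
    rw [NB_eq (e+1) (e+2) (by omega) t, tshift]
  have step1 : 2*((e:ℝ)+1) * NA (e+1) t
      = t * ∑ j ∈ range (e+2),
          (2*((e:ℝ)+1) * ((1/((j:ℝ)+1)) * ((e.choose j : ℝ)) * (((e+1).choose j : ℝ)))) * t^j := by
    rw [NA_eq' e t, mul_left_comm, Finset.mul_sum]
    congr 1
    exact Finset.sum_congr rfl fun j _ => by ring
  rw [step1, tshift, f1, NB_eq (e+2) (e+3) (by omega) t, NB_eq (e+1) (e+3) (by omega) t,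
    ← Finset.sum_sub_distrib, ← Finset.sum_sub_distrib]
  apply Finset.sum_congr rfl
  intro k _
  match k with
  | 0 => norm_num
  | (j+1) =>
    rw [if_neg (Nat.succ_ne_zero j), if_neg (Nat.succ_ne_zero j), Nat.add_sub_cancel]
    linear_combination (t^(j+1)) * Acoef e j

lemma E4 (e : ℕ) (t : ℝ) :
    2 * NA (e+1) t = 2*(1+t)*NB (e+1) t - NB (e+2) t - (1-t)^2 * NB e t := by
  have hA := Apoly e t
  have hL := Lpoly (e+1) t
  simp only [Nat.add_sub_cancel] at hL
  push_cast at hL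
  have he : ((e:ℝ)+1) ≠ 0 := by positivity
  apply mul_left_cancel₀ he
  linear_combination hA + hL

/-! ### The self-convolution `W` of `NB` and its recurrence -/

noncomputable def W (m : ℕ) (t : ℝ) : ℝ := ∑ a ∈ Finset.range (m+1), NB a t * NB (m - a) t

lemma wsym (m : ℕ) (t : ℝ) :
    ∑ a ∈ range (m+1), (a:ℝ) * (NB a t * NB (m-a) t) = (m:ℝ)/2 * W m t := by
  have h2 : ∑ a ∈ range (m+1), ((m:ℝ) - a) * (NB a t * NB (m-a) t)
      = ∑ a ∈ range (m+1), (a:ℝ) * (NB a t * NB (m-a) t) := by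
    rw [← Finset.sum_range_reflect (fun a => (a:ℝ) * (NB a t * NB (m-a) t)) (m+1)]
    apply Finset.sum_congr rfl
    intro j hj
    have hjm : j ≤ m := by simpa [Nat.lt_succ_iff] using hj
    rw [show m + 1 - 1 - j = m - j by omega, show m - (m - j) = j by omega,
      Nat.cast_sub hjm]
    ring
  have h4 : ∑ a ∈ range (m+1),
      (((m:ℝ) - a) * (NB a t * NB (m-a) t) + (a:ℝ) * (NB a t * NB (m-a) t))
      = (m:ℝ) * W m t := by
    rw [W, Finset.mul_sum]
    exact Finset.sum_congr rfl fun a _ => by ring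
  rw [Finset.sum_add_distrib, h2] at h4
  linarith

lemma Wrec (e : ℕ) (t : ℝ) :
    W (e+2) t + (1-t)^2 * W e t = 2*(1+t)*W (e+1) t := by
  have hTb : ∑ a ∈ range (e+2), (2*(a:ℝ)+1)*(1+t) * (NB a t * NB (e+1-a) t)
      = ∑ a ∈ range (e+2), (((a:ℝ)+1) * (NB (a+1) t * NB (e+1-a) t))
        + (1-t)^2 * ∑ a ∈ range (e+2), ((a:ℝ) * (NB (a-1) t * NB (e+1-a) t)) := by
    rw [Finset.mul_sum, ← Finset.sum_add_distrib]
    apply Finset.sum_congr rfl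
    intro a _
    linear_combination (-(NB (e+1-a) t)) * Lpoly a t
  have hTa : ∑ a ∈ range (e+2), (2*(a:ℝ)+1)*(1+t) * (NB a t * NB (e+1-a) t)
      = ((e:ℝ)+2)*(1+t)*W (e+1) t := by
    have expand : ∑ a ∈ range (e+2), (2*(a:ℝ)+1)*(1+t) * (NB a t * NB (e+1-a) t)
        = 2*(1+t) * ∑ a ∈ range (e+2), (a:ℝ) * (NB a t * NB (e+1-a) t)
          + (1+t) * W (e+1) t := by
      rw [W, Finset.mul_sum, Finset.mul_sum, ← Finset.sum_add_distrib]
      exact Finset.sum_congr rfl fun a _ => by ring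
    rw [expand, wsym (e+1) t]
    push_cast
    ring
  have hS1 : ∑ a ∈ range (e+2), (((a:ℝ)+1) * (NB (a+1) t * NB (e+1-a) t))
      = ((e:ℝ)+2)/2 * W (e+2) t := by
    have h := wsym (e+2) t
    rw [Finset.sum_range_succ'] at h
    simp only [Nat.cast_zero, zero_mul, add_zero, Nat.succ_sub_succ] at h
    push_cast at h
    rw [← h]
  have hS2 : ∑ a ∈ range (e+2), ((a:ℝ) * (NB (a-1) t * NB (e+1-a) t))
      = ((e:ℝ)+2)/2 * W e t := by
    rw [Finset.sum_range_succ']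
    simp only [Nat.cast_zero, zero_mul, add_zero, Nat.succ_sub_succ, Nat.add_sub_cancel,
      Nat.sub_zero]
    have h := wsym e t
    have comb : ∑ i ∈ range (e+1), (((i:ℕ):ℝ)+1) * (NB i t * NB (e-i) t)
        = ∑ i ∈ range (e+1), (i:ℝ) * (NB i t * NB (e-i) t) + W e t := by
      rw [W, ← Finset.sum_add_distrib]
      exact Finset.sum_congr rfl fun i _ => by ring
    have cast1 : ∑ i ∈ range (e+1), ((i+1:ℕ):ℝ) * (NB i t * NB (e-i) t)
        = ∑ i ∈ range (e+1), (((i:ℕ):ℝ)+1) * (NB i t * NB (e-i) t) := by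
      apply Finset.sum_congr rfl
      intro i _
      push_cast
      ring
    rw [cast1, comb, h]
    push_cast
    ring
  rw [hTb, hS1, hS2] at hTa
  have he : ((e:ℝ)+2)/2 ≠ 0 := by positivity
  apply mul_left_cancel₀ he
  linear_combination hTa

/-! ### The key convolution identity -/

lemma Wexp1 (e : ℕ) (t : ℝ) :
    W (e+1) t = (∑ i ∈ range (e+1), NB (i+1) t * NB (e-i) t) + NB (e+1) t := by
  rw [W, Finset.sum_range_succ']
  simp only [Nat.succ_sub_succ, Nat.sub_zero]
  rw [NB0]
  ring

lemma Wexp2 (e : ℕ) (t : ℝ) :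
    W (e+2) t = (∑ i ∈ range (e+1), NB (i+2) t * NB (e-i) t)
      + (1+t) * NB (e+1) t + NB (e+2) t := by
  rw [W, Finset.sum_range_succ', Finset.sum_range_succ']
  simp only [Nat.succ_sub_succ, Nat.sub_zero]
  rw [NB0, NB1]
  simp only [show ∀ x:ℕ, x+1+1 = x+2 from fun _ => rfl]
  ring

lemma star (m : ℕ) (t : ℝ) :
    2 * ∑ k ∈ Finset.Icc 1 m, NA k t * NB (m-k) t = NB (m+1) t - (1+t) * NB m t := by
  match m with
  | 0 => simp [NB0, NB1]
  | (e+1) =>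
    have hIcc : ∑ k ∈ Finset.Icc 1 (e+1), NA k t * NB (e+1-k) t
        = ∑ i ∈ range (e+1), NA (i+1) t * NB (e-i) t := by
      rw [← Finset.Ico_add_one_right_eq_Icc, Finset.sum_Ico_eq_sum_range]
      apply Finset.sum_congr (by norm_num)
      intro i _
      rw [show 1 + i = i + 1 by omega, show e + 1 - (i+1) = e - i by omega]
    rw [hIcc, Finset.mul_sum]
    have hterm : ∀ i ∈ range (e+1), 2 * (NA (i+1) t * NB (e-i) t)
        = 2*(1+t) * (NB (i+1) t * NB (e-i) t) - NB (i+2) t * NB (e-i) t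
          - (1-t)^2 * (NB i t * NB (e-i) t) := by
      intro i _
      linear_combination (NB (e-i) t) * E4 i t
    rw [Finset.sum_congr rfl hterm]
    rw [Finset.sum_sub_distrib, Finset.sum_sub_distrib, ← Finset.mul_sum, ← Finset.mul_sum]
    have h1 : ∑ i ∈ range (e+1), NB (i+1) t * NB (e-i) t = W (e+1) t - NB (e+1) t := by
      rw [Wexp1]; ring
    have h2 : ∑ i ∈ range (e+1), NB (i+2) t * NB (e-i) t
        = W (e+2) t - (1+t) * NB (e+1) t - NB (e+2) t := by
      rw [Wexp2]; ring
    have h3 : ∑ i ∈ range (e+1), NB i t * NB (e-i) t = W e t := by rw [W]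
    rw [h1, h2, h3]
    have := Wrec e t
    linarith

/-! ### Main theorem -/

theorem stmt5 (n : ℕ) (hn : 1 ≤ n) (t : ℝ) :
    NB n t = t * NB (n - 1) t + (∑ k ∈ Finset.Icc 1 n, NA (k - 1) t * NB (n - k) t)
      + ∑ k ∈ Finset.Icc 1 (n - 1), NB (k - 1) t * NA (n - k) t := by
  obtain ⟨p, rfl⟩ : ∃ p, n = p + 1 := ⟨n - 1, by omega⟩
  simp only [Nat.add_sub_cancel]
  have hsum1 : ∑ k ∈ Finset.Icc 1 (p+1), NA (k-1) t * NB (p+1-k) t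
      = (∑ i ∈ range p, NA (i+1) t * NB (p-1-i) t) + NB p t := by
    rw [← Finset.Ico_add_one_right_eq_Icc, Finset.sum_Ico_eq_sum_range]
    rw [show p + 1 + 1 - 1 = p + 1 by omega]
    rw [Finset.sum_range_succ']
    simp only [show ∀ i:ℕ, 1 + (i+1) - 1 = i + 1 from fun i => by omega,
      show (1 + 0 - 1 : ℕ) = 0 from rfl, NA0]
    congr 1
    · apply Finset.sum_congr rfl
      intro i _
      rw [show p + 1 - (1 + (i+1)) = p - 1 - i by omega]
    · rw [show p + 1 - (1+0) = p by omega]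
      ring
  have hsum2 : ∑ k ∈ Finset.Icc 1 p, NB (k-1) t * NA (p+1-k) t
      = ∑ i ∈ range p, NA (i+1) t * NB (p-1-i) t := by
    rw [← Finset.Ico_add_one_right_eq_Icc, Finset.sum_Ico_eq_sum_range]
    rw [show p + 1 - 1 = p from rfl]
    rw [← Finset.sum_range_reflect (fun i => NA (i+1) t * NB (p-1-i) t) p]
    apply Finset.sum_congr rfl
    intro j hj
    have hjp : j < p := by simpa using hj
    rw [show 1 + j - 1 = j by omega, show p + 1 - (1+j) = (p - 1 - j) + 1 by omega,
      show p - 1 - (p - 1 - j) = j by omega]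
    ring
  have hstar : 2 * ∑ k ∈ Finset.Icc 1 p, NA k t * NB (p-k) t
      = NB (p+1) t - (1+t) * NB p t := star p t
  have hconv : ∑ k ∈ Finset.Icc 1 p, NA k t * NB (p-k) t
      = ∑ i ∈ range p, NA (i+1) t * NB (p-1-i) t := by
    rcases Nat.eq_zero_or_pos p with hp | hp
    · subst hp; simp
    · rw [← Finset.Ico_add_one_right_eq_Icc, Finset.sum_Ico_eq_sum_range]
      apply Finset.sum_congr (by norm_num)
      intro i _
      rw [show 1 + i = i + 1 by omega, show p - (i+1) = p - 1 - i by omega]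
  rw [hsum1, hsum2]
  rw [hconv] at hstar
  linarith
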